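/- Let ρ be an n×n complex density matrix and σ an m×m complex density matrix, let A be a Hermitian n×n matrix and B a Hermitian m×m matrix, and let s, t ∈ ℝ. Then the quantum Fisher information of the product state ρ ⊗ σ with respect to the observable s·(A ⊗ I_m) + t·(I_n ⊗ B) satisfies I_F(ρ ⊗ σ, s·(A ⊗ I_m) + t·(I_n ⊗ B)) = s² I_F(ρ, A) + t² I_F(σ, B). -/

import Mathlib

open Matrix BigOperators ComplexOrder Kronecker

/-- The complex inner product `⟨x, y⟩ = ∑ k, conj (x k) * y k`. -/
noncomputable def dotc {ι : Type*} [Fintype ι] (x y : ι → ℂ) : ℂ :=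
  ∑ k, (starRingEnd ℂ) (x k) * y k

/-- Quantum Fisher information of a state with spectral data `(lam, e)` with respect to
the observable `A`. -/
noncomputable def qfi {ι : Type*} [Fintype ι] (lam : ι → ℝ) (e : ι → ι → ℂ)
    (A : Matrix ι ι ℂ) : ℝ :=
  2 * ∑ i, ∑ j, if lam i + lam j ≠ 0 then
      ((lam i - lam j) ^ 2 / (lam i + lam j)) * Complex.normSq (dotc (e i) (A.mulVec (e j)))
    else 0

noncomputable def Cw (x y : ℝ) : ℝ := if x + y ≠ 0 then (x - y) ^ 2 / (x + y) else 0

lemma Cw_self (x : ℝ) : Cw x x = 0 := by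
  unfold Cw; split <;> simp

lemma Cw_scale (c x y : ℝ) : Cw (c * x) (c * y) = c * Cw x y := by
  unfold Cw
  rcases eq_or_ne c 0 with h | h
  · simp [h]
  · rw [← mul_add]
    rcases eq_or_ne (x + y) 0 with h2 | h2
    · simp [h2]
    · have : c * (x + y) ≠ 0 := mul_ne_zero h h2
      simp only [this, ne_eq, not_false_iff, if_true, h2]
      field_simp

section ON
variable {ι : Type*} [Fintype ι] [DecidableEq ι]

/-- completeness of an orthonormal family of full cardinality -/
lemma on_complete (g : ι → ι → ℂ)
    (hON : ∀ a b, dotc (g a) (g b) = if a = b then 1 else 0) :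
    ∀ k l, ∑ a, (starRingEnd ℂ) (g a k) * g a l = if k = l then 1 else 0 := by
  intro k l
  have hGG : (Matrix.of g) * (Matrix.of g)ᴴ = 1 := by
    ext a b
    simp only [Matrix.mul_apply, Matrix.conjTranspose_apply, Matrix.of_apply, Matrix.one_apply]
    have := hON a b
    simp only [dotc] at this
    calc ∑ k, g a k * (starRingEnd ℂ) (g b k)
        = (starRingEnd ℂ) (∑ k, (starRingEnd ℂ) (g a k) * g b k) := by
          rw [map_sum]; congr 1; ext k; simp
      _ = (starRingEnd ℂ) (if a = b then 1 else 0) := by rw [this]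
      _ = if a = b then 1 else 0 := by
          by_cases h : a = b <;> simp [h]
  have hGG2 : (Matrix.of g)ᴴ * (Matrix.of g) = 1 := mul_eq_one_comm.mp hGG
  have := congrFun (congrFun hGG2 k) l
  simpa [Matrix.mul_apply, Matrix.conjTranspose_apply, Matrix.one_apply] using this

end ON

section ON
variable {ι : Type*} [Fintype ι] [DecidableEq ι]

lemma dec_mulVec (μ : ι → ℝ) (g : ι → ι → ℂ) (x : ι → ℂ) :
    (∑ b, (μ b : ℂ) • Matrix.vecMulVec (g b) (fun k => (starRingEnd ℂ) (g b k))).mulVec x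
    = fun p => ∑ b, (μ b : ℂ) * dotc (g b) x * g b p := by
  ext p
  simp only [Matrix.mulVec, dotProduct, Matrix.sum_apply, Matrix.smul_apply,
    Matrix.vecMulVec_apply, smul_eq_mul, Finset.sum_mul, dotc, Finset.mul_sum]
  rw [Finset.sum_comm]
  exact Finset.sum_congr rfl fun b _ => Finset.sum_congr rfl fun q _ => by ring

lemma dotc_dec (μ : ι → ℝ) (g : ι → ι → ℂ)
    (hON : ∀ a b, dotc (g a) (g b) = if a = b then 1 else 0) (a : ι) (x : ι → ℂ) :
    dotc (g a)
      ((∑ b, (μ b : ℂ) • Matrix.vecMulVec (g b) (fun k => (starRingEnd ℂ) (g b k))).mulVec x)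
    = (μ a : ℂ) * dotc (g a) x := by
  have hON' : ∀ a b, (∑ p, (starRingEnd ℂ) (g a p) * g b p) = if a = b then 1 else 0 := hON
  rw [dec_mulVec]
  show ∑ p, (starRingEnd ℂ) (g a p) * (∑ b, (μ b : ℂ) * dotc (g b) x * g b p) = _
  set F : ι → ℂ := fun b => (μ b : ℂ) * dotc (g b) x with hF
  calc ∑ p, (starRingEnd ℂ) (g a p) * (∑ b, F b * g b p)
      = ∑ p, ∑ b, F b * ((starRingEnd ℂ) (g a p) * g b p) := by
        refine Finset.sum_congr rfl fun p _ => ?_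
        rw [Finset.mul_sum]
        exact Finset.sum_congr rfl fun b _ => by ring
    _ = ∑ b, F b * ∑ p, (starRingEnd ℂ) (g a p) * g b p := by
        rw [Finset.sum_comm]
        exact Finset.sum_congr rfl fun b _ => by rw [Finset.mul_sum]
    _ = F a := by
        simp only [hON', mul_ite, mul_one, mul_zero]
        simp

lemma dec_mulVec_self (μ : ι → ℝ) (g : ι → ι → ℂ)
    (hON : ∀ a b, dotc (g a) (g b) = if a = b then 1 else 0) (j : ι) :
    (∑ b, (μ b : ℂ) • Matrix.vecMulVec (g b) (fun k => (starRingEnd ℂ) (g b k))).mulVec (g j)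
    = fun p => (μ j : ℂ) * g j p := by
  rw [dec_mulVec]
  ext p
  simp only [hON, mul_ite, mul_one, mul_zero, ite_mul, zero_mul]
  rw [Finset.sum_ite_eq' Finset.univ j (fun b => (μ b : ℂ) * g b p)]
  simp

lemma parseval (E : ι → ι → ℂ)
    (hcomp : ∀ k l, ∑ a, (starRingEnd ℂ) (E a k) * E a l = if k = l then 1 else 0)
    (v w : ι → ℂ) :
    ∑ i, dotc v (E i) * (starRingEnd ℂ) (dotc w (E i)) = dotc v w := by
  have step : ∀ i, dotc v (E i) * (starRingEnd ℂ) (dotc w (E i))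
      = ∑ k, ∑ l, ((starRingEnd ℂ) (v k) * w l) * (E i k * (starRingEnd ℂ) (E i l)) := by
    intro i
    rw [dotc, dotc, map_sum, Finset.sum_mul_sum]
    exact Finset.sum_congr rfl fun k _ => Finset.sum_congr rfl fun l _ => by
      simp only [_root_.map_mul, RingHomCompTriple.comp_apply, Complex.conj_conj,
        RingHom.id_apply]
      ring
  rw [Finset.sum_congr rfl fun i _ => step i, Finset.sum_comm]
  have inner : ∀ k, ∑ i, ∑ l, ((starRingEnd ℂ) (v k) * w l) * (E i k * (starRingEnd ℂ) (E i l))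
      = (starRingEnd ℂ) (v k) * w k := by
    intro k
    rw [Finset.sum_comm]
    have h2 : ∀ l, ∑ i, ((starRingEnd ℂ) (v k) * w l) * (E i k * (starRingEnd ℂ) (E i l))
        = ((starRingEnd ℂ) (v k) * w l) * (if l = k then 1 else 0) := by
      intro l
      rw [← Finset.mul_sum]
      congr 1
      calc ∑ i, E i k * (starRingEnd ℂ) (E i l)
          = (starRingEnd ℂ) (∑ i, (starRingEnd ℂ) (E i k) * E i l) := by
            rw [map_sum]; congr 1; ext i; simp [mul_comm]
        _ = (starRingEnd ℂ) (if k = l then 1 else 0) := by rw [hcomp]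
        _ = if l = k then 1 else 0 := by by_cases h : k = l <;> simp [h, eq_comm] <;> tauto
    rw [Finset.sum_congr rfl fun l _ => h2 l]
    simp only [mul_ite, mul_one, mul_zero]
    simp
  rw [Finset.sum_congr rfl fun k _ => inner k, dotc]

lemma expand_in_basis (g : ι → ι → ℂ)
    (hcomp : ∀ k l, ∑ a, (starRingEnd ℂ) (g a k) * g a l = if k = l then 1 else 0)
    (v : ι → ℂ) (k : ι) :
    v k = ∑ a, dotc (g a) v * g a k := by
  have : ∑ a, dotc (g a) v * g a k = ∑ a, ∑ l, ((starRingEnd ℂ) (g a l) * g a k) * v l := by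
    exact Finset.sum_congr rfl fun a _ => by
      rw [dotc, Finset.sum_mul]; exact Finset.sum_congr rfl fun l _ => by ring
  rw [this, Finset.sum_comm]
  have h2 : ∀ l, ∑ a, ((starRingEnd ℂ) (g a l) * g a k) * v l
      = (if l = k then 1 else 0) * v l := by
    intro l
    rw [← Finset.sum_mul, hcomp]
  rw [Finset.sum_congr rfl fun l _ => h2 l]
  simp

end ON

section Collapse
variable {ι : Type*} [Fintype ι] [DecidableEq ι]

lemma swap3 {γ : Type*} [AddCommMonoid γ] (F : ι → ι → ι → γ) :
    ∑ i, ∑ j, ∑ a, F i j a = ∑ a, ∑ i, ∑ j, F i j a := by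
  rw [Finset.sum_congr rfl fun i _ => Finset.sum_comm, Finset.sum_comm]

lemma factor3 (K : ℂ) (f h : ι → ℂ) :
    ∑ i, ∑ j, K * f i * h j = K * (∑ i, f i) * (∑ j, h j) := by
  calc ∑ i, ∑ j, K * f i * h j = ∑ i, (K * f i) * ∑ j, h j :=
        Finset.sum_congr rfl fun i _ => (Finset.mul_sum _ _ _).symm
    _ = (∑ i, K * f i) * ∑ j, h j := (Finset.sum_mul _ _ _).symm
    _ = K * (∑ i, f i) * (∑ j, h j) := by rw [← Finset.mul_sum]

lemma collapse (CL Cm : ι → ι → ℝ) (U W D : ι → ι → ℂ)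
    (hkey : ∀ a b i j, U a i ≠ 0 → U b j ≠ 0 → CL i j = Cm a b)
    (hrow : ∀ a a', ∑ i, U a i * (starRingEnd ℂ) (U a' i) = if a = a' then 1 else 0)
    (hD : ∀ i j, D i j = ∑ a, ∑ b, (starRingEnd ℂ) (U a i) * U b j * W a b) :
    ∑ i, ∑ j, (CL i j : ℂ) * (D i j * (starRingEnd ℂ) (D i j))
      = ∑ a, ∑ b, (Cm a b : ℂ) * (W a b * (starRingEnd ℂ) (W a b)) := by
  have hDc : ∀ i j, (starRingEnd ℂ) (D i j)
      = ∑ a', ∑ b', U a' i * (starRingEnd ℂ) (U b' j) * (starRingEnd ℂ) (W a' b') := by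
    intro i j
    rw [hD, map_sum]
    refine Finset.sum_congr rfl fun a' _ => ?_
    rw [map_sum]
    refine Finset.sum_congr rfl fun b' _ => ?_
    simp only [_root_.map_mul, Complex.conj_conj]
  have inner6 : ∀ i j, (CL i j : ℂ) * (D i j * (starRingEnd ℂ) (D i j))
      = ∑ a, ∑ a', ∑ b, ∑ b', (CL i j : ℂ) *
          ((starRingEnd ℂ) (U a i) * U b j * W a b) *
          (U a' i * (starRingEnd ℂ) (U b' j) * (starRingEnd ℂ) (W a' b')) := by
    intro i j
    rw [hDc i j, hD i j, Finset.sum_mul_sum]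
    rw [Finset.mul_sum]
    refine Finset.sum_congr rfl fun a _ => ?_
    rw [Finset.mul_sum]
    refine Finset.sum_congr rfl fun a' _ => ?_
    rw [Finset.sum_mul_sum, Finset.mul_sum]
    refine Finset.sum_congr rfl fun b _ => ?_
    rw [Finset.mul_sum]
    refine Finset.sum_congr rfl fun b' _ => ?_
    ring
  rw [Finset.sum_congr rfl fun i _ => Finset.sum_congr rfl fun j _ => inner6 i j]
  -- pull the four sums a, a', b, b' to the outside
  rw [swap3 (fun i j a => _)]
  rw [Finset.sum_congr rfl fun a _ => swap3 (fun i j a' => _)]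
  rw [Finset.sum_congr rfl fun a _ => Finset.sum_congr rfl fun a' _ =>
    swap3 (fun i j b => _)]
  rw [Finset.sum_congr rfl fun a _ => Finset.sum_congr rfl fun a' _ =>
    Finset.sum_congr rfl fun b _ => swap3 (fun i j b' => _)]
  -- now handle each (a, a', b, b')
  have hmain : ∀ a a' b b',
      ∑ i, ∑ j, (CL i j : ℂ) *
          ((starRingEnd ℂ) (U a i) * U b j * W a b) *
          (U a' i * (starRingEnd ℂ) (U b' j) * (starRingEnd ℂ) (W a' b'))
      = (Cm a b : ℂ) * W a b * (starRingEnd ℂ) (W a' b') *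
          (if a = a' then 1 else 0) * (if b = b' then 1 else 0) := by
    intro a a' b b'
    have htw : ∀ i j, (CL i j : ℂ) *
          ((starRingEnd ℂ) (U a i) * U b j * W a b) *
          (U a' i * (starRingEnd ℂ) (U b' j) * (starRingEnd ℂ) (W a' b'))
        = ((Cm a b : ℂ) * W a b * (starRingEnd ℂ) (W a' b')) *
            ((starRingEnd ℂ) (U a i) * U a' i) * (U b j * (starRingEnd ℂ) (U b' j)) := by
      intro i j
      by_cases h1 : U a i = 0
      · simp [h1]
      by_cases h2 : U b j = 0
      · simp [h2]
      rw [hkey a b i j h1 h2]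
      ring
    rw [Finset.sum_congr rfl fun i _ => Finset.sum_congr rfl fun j _ => htw i j]
    rw [factor3]
    have hr1 : ∑ i, (starRingEnd ℂ) (U a i) * U a' i = if a = a' then 1 else 0 := by
      calc ∑ i, (starRingEnd ℂ) (U a i) * U a' i
          = (starRingEnd ℂ) (∑ i, U a i * (starRingEnd ℂ) (U a' i)) := by
            rw [map_sum]
            exact Finset.sum_congr rfl fun i _ => by
              simp only [_root_.map_mul, Complex.conj_conj]
        _ = (starRingEnd ℂ) (if a = a' then 1 else 0) := by rw [hrow]
        _ = if a = a' then 1 else 0 := by split <;> simp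
    rw [hr1, hrow b b']
  rw [Finset.sum_congr rfl fun a _ => Finset.sum_congr rfl fun a' _ =>
    Finset.sum_congr rfl fun b _ => Finset.sum_congr rfl fun b' _ => hmain a a' b b']
  -- collapse the Kronecker deltas
  refine Finset.sum_congr rfl fun a _ => ?_
  rw [Finset.sum_comm]
  simp only [mul_ite, mul_one, mul_zero, ite_mul, zero_mul]
  simp [Finset.sum_ite_eq, Finset.sum_ite_eq']
  refine Finset.sum_congr rfl fun b _ => ?_
  ring
end Collapse

section Exp
variable {ι : Type*} [Fintype ι] [DecidableEq ι]

lemma dotc_mulVec_expand (A : Matrix ι ι ℂ) (x y : ι → ℂ) :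
    dotc x (A.mulVec y) = ∑ k, ∑ l, (starRingEnd ℂ) (x k) * A k l * y l := by
  simp only [dotc, Matrix.mulVec, dotProduct, Finset.mul_sum]
  exact Finset.sum_congr rfl fun k _ => Finset.sum_congr rfl fun l _ => by ring

lemma swap4 {γ : Type*} [AddCommMonoid γ] (F : ι → ι → ι → ι → γ) :
    ∑ k, ∑ l, ∑ a, ∑ b, F k l a b = ∑ a, ∑ b, ∑ k, ∑ l, F k l a b := by
  have swap3' : ∀ (G : ι → ι → ι → γ), ∑ i, ∑ j, ∑ a, G i j a = ∑ a, ∑ i, ∑ j, G i j a := by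
    intro G
    rw [Finset.sum_congr rfl fun i _ => Finset.sum_comm, Finset.sum_comm]
  rw [Finset.sum_congr rfl fun k _ => Finset.sum_comm, Finset.sum_comm]
  exact Finset.sum_congr rfl fun a _ => swap3' _

lemma expand_bilin (A : Matrix ι ι ℂ) (g : ι → ι → ℂ) (c d : ι → ℂ) (x y : ι → ℂ)
    (hx : ∀ k, x k = ∑ a, c a * g a k) (hy : ∀ l, y l = ∑ b, d b * g b l) :
    dotc x (A.mulVec y)
      = ∑ a, ∑ b, (starRingEnd ℂ) (c a) * d b * dotc (g a) (A.mulVec (g b)) := by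
  rw [dotc_mulVec_expand]
  calc ∑ k, ∑ l, (starRingEnd ℂ) (x k) * A k l * y l
      = ∑ k, ∑ l, ∑ a, ∑ b,
          ((starRingEnd ℂ) (c a) * d b) * ((starRingEnd ℂ) (g a k) * A k l * g b l) := by
        refine Finset.sum_congr rfl fun k _ => Finset.sum_congr rfl fun l _ => ?_
        rw [hx k, hy l, map_sum]
        simp only [_root_.map_mul]
        rw [Finset.sum_mul, Finset.sum_mul_sum]
        exact Finset.sum_congr rfl fun a _ => Finset.sum_congr rfl fun b _ => by ring
    _ = ∑ a, ∑ b, ∑ k, ∑ l,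
          ((starRingEnd ℂ) (c a) * d b) * ((starRingEnd ℂ) (g a k) * A k l * g b l) :=
        swap4 _
    _ = ∑ a, ∑ b, (starRingEnd ℂ) (c a) * d b * dotc (g a) (A.mulVec (g b)) := by
        refine Finset.sum_congr rfl fun a _ => Finset.sum_congr rfl fun b _ => ?_
        rw [dotc_mulVec_expand, Finset.mul_sum]
        exact Finset.sum_congr rfl fun k _ => by rw [Finset.mul_sum]

lemma dotc_smul_right (x y : ι → ℂ) (cc : ℂ) :
    dotc x (fun p => cc * y p) = cc * dotc x y := by
  simp only [dotc, Finset.mul_sum]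
  exact Finset.sum_congr rfl fun p _ => by ring

end Exp


section Inv
variable {ι : Type*} [Fintype ι] [DecidableEq ι]

lemma qfi_invariant (mu L : ι → ℝ) (g E : ι → ι → ℂ) (A : Matrix ι ι ℂ)
    (hONg : ∀ a b, dotc (g a) (g b) = if a = b then 1 else 0)
    (hONE : ∀ a b, dotc (E a) (E b) = if a = b then 1 else 0)
    (hMM : (∑ b, (mu b : ℂ) • Matrix.vecMulVec (g b) (fun k => (starRingEnd ℂ) (g b k)))
        = ∑ b, (L b : ℂ) • Matrix.vecMulVec (E b) (fun k => (starRingEnd ℂ) (E b k))) :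
    ∑ i, ∑ j, Cw (L i) (L j) * Complex.normSq (dotc (E i) (A.mulVec (E j)))
      = ∑ a, ∑ b, Cw (mu a) (mu b) * Complex.normSq (dotc (g a) (A.mulVec (g b))) := by
  have hcompg := on_complete g hONg
  have hcompE := on_complete E hONE
  -- eigenvalue matching
  have heig : ∀ a i, dotc (g a) (E i) ≠ 0 → L i = mu a := by
    intro a i hne
    have h1 : dotc (g a)
        ((∑ b, (mu b : ℂ) • Matrix.vecMulVec (g b) (fun k => (starRingEnd ℂ) (g b k))).mulVec (E i))
        = (mu a : ℂ) * dotc (g a) (E i) := dotc_dec mu g hONg a (E i)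
    rw [hMM, dec_mulVec_self L E hONE i, show (fun p => (L i : ℂ) * E i p) = fun p => (L i : ℂ) * E i p from rfl] at h1
    rw [dotc_smul_right] at h1
    have := mul_right_cancel₀ hne h1.symm
    exact_mod_cast this.symm
  have hkey : ∀ a b i j, dotc (g a) (E i) ≠ 0 → dotc (g b) (E j) ≠ 0 →
      Cw (L i) (L j) = Cw (mu a) (mu b) := by
    intro a b i j h1 h2
    rw [heig a i h1, heig b j h2]
  have hrow : ∀ a a', ∑ i, dotc (g a) (E i) * (starRingEnd ℂ) (dotc (g a') (E i))
      = if a = a' then 1 else 0 := by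
    intro a a'
    rw [parseval E hcompE (g a) (g a'), hONg]
  have hD : ∀ i j, dotc (E i) (A.mulVec (E j)) = ∑ a, ∑ b,
      (starRingEnd ℂ) (dotc (g a) (E i)) * dotc (g b) (E j) * dotc (g a) (A.mulVec (g b)) := by
    intro i j
    exact expand_bilin A g (fun a => dotc (g a) (E i)) (fun b => dotc (g b) (E j)) (E i) (E j)
      (fun k => expand_in_basis g hcompg (E i) k) (fun l => expand_in_basis g hcompg (E j) l)
  have hcoll := collapse (fun i j => Cw (L i) (L j)) (fun a b => Cw (mu a) (mu b))
    (fun a i => dotc (g a) (E i)) (fun a b => dotc (g a) (A.mulVec (g b)))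
    (fun i j => dotc (E i) (A.mulVec (E j))) hkey hrow hD
  have cast1 : ∀ (c : ι → ι → ℝ) (z : ι → ι → ℂ),
      ((∑ i, ∑ j, c i j * Complex.normSq (z i j) : ℝ) : ℂ)
      = ∑ i, ∑ j, (c i j : ℂ) * (z i j * (starRingEnd ℂ) (z i j)) := by
    intro c z
    push_cast
    exact Finset.sum_congr rfl fun i _ => Finset.sum_congr rfl fun j _ => by
      rw [Complex.mul_conj]
  have : ((∑ i, ∑ j, Cw (L i) (L j) * Complex.normSq (dotc (E i) (A.mulVec (E j))) : ℝ) : ℂ)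
      = ((∑ a, ∑ b, Cw (mu a) (mu b) * Complex.normSq (dotc (g a) (A.mulVec (g b))) : ℝ) : ℂ) := by
    rw [cast1, cast1]
    exact hcoll
  exact_mod_cast this

end Inv


lemma Cw_scale' (c x y : ℝ) : Cw (x * c) (y * c) = c * Cw x y := by
  rw [mul_comm x c, mul_comm y c, Cw_scale]

lemma qfi_eq {ι : Type*} [Fintype ι] (lam : ι → ℝ) (e : ι → ι → ℂ) (A : Matrix ι ι ℂ) :
    qfi lam e A = 2 * ∑ i, ∑ j, Cw (lam i) (lam j)
      * Complex.normSq (dotc (e i) (A.mulVec (e j))) := by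
  unfold qfi Cw
  congr 1
  refine Finset.sum_congr rfl fun i _ => Finset.sum_congr rfl fun j _ => ?_
  rw [ite_mul, zero_mul]

lemma dotc_add_right {ι : Type*} [Fintype ι] (x y z : ι → ℂ) :
    dotc x (y + z) = dotc x y + dotc x z := by
  simp only [dotc, Pi.add_apply, mul_add]
  rw [Finset.sum_add_distrib]

lemma dotc_smul_right' {ι : Type*} [Fintype ι] (x y : ι → ℂ) (c : ℂ) :
    dotc x (c • y) = c * dotc x y := by
  simp only [dotc, Pi.smul_apply, smul_eq_mul, Finset.mul_sum]
  exact Finset.sum_congr rfl fun p _ => by ring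

section Prod
variable {n m : ℕ}

lemma dotc_prod (x1 y1 : Fin n → ℂ) (x2 y2 : Fin m → ℂ) :
    dotc (fun p : Fin n × Fin m => x1 p.1 * x2 p.2) (fun p => y1 p.1 * y2 p.2)
      = dotc x1 y1 * dotc x2 y2 := by
  simp only [dotc, Fintype.sum_prod_type, _root_.map_mul]
  rw [Finset.sum_mul_sum]
  exact Finset.sum_congr rfl fun k _ => Finset.sum_congr rfl fun l _ => by ring

lemma kron_mulVec_prod (A : Matrix (Fin n) (Fin n) ℂ) (BB : Matrix (Fin m) (Fin m) ℂ)
    (x : Fin n → ℂ) (y : Fin m → ℂ) :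
    (A ⊗ₖ BB).mulVec (fun p : Fin n × Fin m => x p.1 * y p.2)
      = fun p => (A.mulVec x) p.1 * (BB.mulVec y) p.2 := by
  ext p
  simp only [Matrix.mulVec, dotProduct, Fintype.sum_prod_type,
    Matrix.kroneckerMap_apply]
  rw [Finset.sum_mul_sum]
  exact Finset.sum_congr rfl fun k _ => Finset.sum_congr rfl fun l _ => by ring

lemma kron_dec (lam : Fin n → ℝ) (kap : Fin m → ℝ) (e : Fin n → Fin n → ℂ)
    (f : Fin m → Fin m → ℂ) (ρ : Matrix (Fin n) (Fin n) ℂ) (σ : Matrix (Fin m) (Fin m) ℂ)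
    (hdecρ : ρ = ∑ i, (lam i : ℂ) •
      Matrix.vecMulVec (e i) (fun k => (starRingEnd ℂ) (e i k)))
    (hdecσ : σ = ∑ i, (kap i : ℂ) •
      Matrix.vecMulVec (f i) (fun k => (starRingEnd ℂ) (f i k))) :
    ρ ⊗ₖ σ = ∑ p : Fin n × Fin m, ((lam p.1 * kap p.2 : ℝ) : ℂ) •
      Matrix.vecMulVec (fun q : Fin n × Fin m => e p.1 q.1 * f p.2 q.2)
        (fun q => (starRingEnd ℂ) (e p.1 q.1 * f p.2 q.2)) := by
  ext q r
  have hρ := congrFun (congrFun hdecρ q.1) r.1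
  have hσ := congrFun (congrFun hdecσ q.2) r.2
  simp only [Matrix.sum_apply, Matrix.smul_apply, Matrix.vecMulVec_apply, smul_eq_mul] at hρ hσ
  simp only [Matrix.kroneckerMap_apply, Matrix.sum_apply, Matrix.smul_apply,
    Matrix.vecMulVec_apply, smul_eq_mul, Fintype.sum_prod_type]
  rw [hρ, hσ, Finset.sum_mul_sum]
  push_cast
  exact Finset.sum_congr rfl fun i _ => Finset.sum_congr rfl fun j _ => by
    simp only [_root_.map_mul]; ring

lemma sum_eig_one (lam : Fin n → ℝ) (e : Fin n → Fin n → ℂ)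
    (hONe : ∀ i j, dotc (e i) (e j) = if i = j then 1 else 0)
    (ρ : Matrix (Fin n) (Fin n) ℂ)
    (hdecρ : ρ = ∑ i, (lam i : ℂ) •
      Matrix.vecMulVec (e i) (fun k => (starRingEnd ℂ) (e i k)))
    (htr : ρ.trace = 1) : ∑ i, lam i = 1 := by
  have h1 : ρ.trace = ∑ i, (lam i : ℂ) := by
    rw [hdecρ, Matrix.trace_sum]
    refine Finset.sum_congr rfl fun i _ => ?_
    rw [Matrix.trace_smul]
    have : (Matrix.vecMulVec (e i) (fun k => (starRingEnd ℂ) (e i k))).trace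
        = dotc (e i) (e i) := by
      rw [Matrix.trace, dotc]
      exact Finset.sum_congr rfl fun k _ => by
        simp [Matrix.diag, Matrix.vecMulVec_apply, mul_comm]
    rw [this, hONe]
    simp
  rw [htr] at h1
  exact_mod_cast h1.symm
end Prod

section PS
variable {n m : ℕ}

lemma sum4_first (w : Fin m → ℝ) (Y : Fin n → Fin n → ℝ) :
    ∑ i : Fin n, ∑ j : Fin m, ∑ k : Fin n, ∑ l : Fin m, (if j = l then w j * Y i k else 0)
      = (∑ j, w j) * (∑ i, ∑ k, Y i k) := by
  have h1 : ∀ (i : Fin n) (j : Fin m) (k : Fin n),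
      ∑ l, (if j = l then w j * Y i k else 0) = w j * Y i k := by
    intro i j k
    rw [Finset.sum_ite_eq]
    simp
  calc ∑ i, ∑ j, ∑ k, ∑ l, (if j = l then w j * Y i k else 0)
      = ∑ i, ∑ j, ∑ k, w j * Y i k := by
        exact Finset.sum_congr rfl fun i _ => Finset.sum_congr rfl fun j _ =>
          Finset.sum_congr rfl fun k _ => h1 i j k
    _ = ∑ j, ∑ i, w j * ∑ k, Y i k := by
        rw [Finset.sum_comm]
        exact Finset.sum_congr rfl fun j _ => Finset.sum_congr rfl fun i _ =>
          (Finset.mul_sum _ _ _).symm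
    _ = ∑ j, w j * ∑ i, ∑ k, Y i k := by
        exact Finset.sum_congr rfl fun j _ => (Finset.mul_sum _ _ _).symm
    _ = (∑ j, w j) * (∑ i, ∑ k, Y i k) := (Finset.sum_mul _ _ _).symm

lemma sum4_second (w : Fin n → ℝ) (Z : Fin m → Fin m → ℝ) :
    ∑ i : Fin n, ∑ j : Fin m, ∑ k : Fin n, ∑ l : Fin m, (if i = k then w i * Z j l else 0)
      = (∑ i, w i) * (∑ j, ∑ l, Z j l) := by
  have h1 : ∀ (i k : Fin n) (j : Fin m),
      ∑ l, (if i = k then w i * Z j l else 0) = if i = k then w i * ∑ l, Z j l else 0 := by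
    intro i k j
    split <;> simp [Finset.mul_sum]
  have h2 : ∀ (i : Fin n) (j : Fin m),
      ∑ k, (if i = k then w i * ∑ l, Z j l else 0) = w i * ∑ l, Z j l := by
    intro i j
    rw [Finset.sum_ite_eq]
    simp
  calc ∑ i, ∑ j, ∑ k, ∑ l, (if i = k then w i * Z j l else 0)
      = ∑ i, ∑ j, w i * ∑ l, Z j l := by
        refine Finset.sum_congr rfl fun i _ => Finset.sum_congr rfl fun j _ => ?_
        rw [Finset.sum_congr rfl fun k _ => h1 i k j]
        exact h2 i j
    _ = ∑ i, w i * ∑ j, ∑ l, Z j l := by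
        exact Finset.sum_congr rfl fun i _ => (Finset.mul_sum _ _ _).symm
    _ = (∑ i, w i) * (∑ j, ∑ l, Z j l) := (Finset.sum_mul _ _ _).symm

lemma qfi_prod_sum (lam : Fin n → ℝ) (kap : Fin m → ℝ)
    (a : Fin n → Fin n → ℂ) (b : Fin m → Fin m → ℂ) (s t : ℝ)
    (hsl : ∑ i, lam i = 1) (hsk : ∑ j, kap j = 1)
    (M : Fin n × Fin m → Fin n × Fin m → ℂ)
    (hM : ∀ p q, M p q = (s : ℂ) * ((if p.2 = q.2 then (1 : ℂ) else 0) * a p.1 q.1)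
        + (t : ℂ) * ((if p.1 = q.1 then (1 : ℂ) else 0) * b p.2 q.2)) :
    ∑ p : Fin n × Fin m, ∑ q : Fin n × Fin m,
        Cw (lam p.1 * kap p.2) (lam q.1 * kap q.2) * Complex.normSq (M p q)
      = s ^ 2 * (∑ i, ∑ k, Cw (lam i) (lam k) * Complex.normSq (a i k))
        + t ^ 2 * (∑ j, ∑ l, Cw (kap j) (kap l) * Complex.normSq (b j l)) := by
  have htw : ∀ p q, Cw (lam p.1 * kap p.2) (lam q.1 * kap q.2) * Complex.normSq (M p q)
      = (if p.2 = q.2 then kap p.2 * (Cw (lam p.1) (lam q.1)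
            * (s ^ 2 * Complex.normSq (a p.1 q.1))) else 0)
        + (if p.1 = q.1 then lam p.1 * (Cw (kap p.2) (kap q.2)
            * (t ^ 2 * Complex.normSq (b p.2 q.2))) else 0) := by
    intro p q
    rw [hM]
    by_cases h2 : p.2 = q.2 <;> by_cases h1 : p.1 = q.1
    · simp [h1, h2, Cw_self]
    · simp only [h2, if_true, h1, if_false, one_mul, mul_zero, add_zero, zero_mul]
      rw [Cw_scale' (kap q.2) (lam p.1) (lam q.1)]
      simp [Complex.normSq_mul, Complex.normSq_ofReal]
      ring
    · simp only [h2, if_false, h1, if_true, one_mul, mul_zero, add_zero, zero_mul, zero_add]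
      rw [Cw_scale (lam q.1) (kap p.2) (kap q.2)]
      simp [Complex.normSq_mul, Complex.normSq_ofReal]
      ring
    · simp [h1, h2]
  rw [Finset.sum_congr rfl fun p _ => Finset.sum_congr rfl fun q _ => htw p q]
  simp only [Finset.sum_add_distrib]
  simp only [Fintype.sum_prod_type]
  rw [sum4_first (fun j => kap j) (fun i k => Cw (lam i) (lam k)
    * (s ^ 2 * Complex.normSq (a i k)))]
  rw [sum4_second (fun i => lam i) (fun j l => Cw (kap j) (kap l)
    * (t ^ 2 * Complex.normSq (b j l)))]
  rw [hsl, hsk]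
  simp only [one_mul]
  rw [Finset.mul_sum, Finset.mul_sum]
  congr 1
  · refine Finset.sum_congr rfl fun i _ => ?_
    rw [Finset.mul_sum]
    exact Finset.sum_congr rfl fun k _ => by ring
  · refine Finset.sum_congr rfl fun j _ => ?_
    rw [Finset.mul_sum]
    exact Finset.sum_congr rfl fun l _ => by ring
end PS

/-- Additivity of the QFI on product states: for density matrices `ρ`, `σ`, Hermitian
observables `A`, `B` and reals `s`, `t`,
`I_F(ρ ⊗ σ, s·(A ⊗ I) + t·(I ⊗ B)) = s² I_F(ρ, A) + t² I_F(σ, B)`, where the QFI of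
`ρ ⊗ σ` is computed from any spectral decomposition `(Λ, E)` of `ρ ⊗ σ` and those of
`ρ`, `σ` from any spectral decompositions `(λ, e)`, `(κ, f)`. -/
theorem qfi_product_state {n m : ℕ}
    (ρ : Matrix (Fin n) (Fin n) ℂ) (σ : Matrix (Fin m) (Fin m) ℂ)
    (A : Matrix (Fin n) (Fin n) ℂ) (B : Matrix (Fin m) (Fin m) ℂ) (s t : ℝ)
    (hρ : ρ.PosSemidef) (htrρ : ρ.trace = 1)
    (hσ : σ.PosSemidef) (htrσ : σ.trace = 1)
    (hA : A.IsHermitian) (hB : B.IsHermitian)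
    (lam : Fin n → ℝ) (e : Fin n → Fin n → ℂ)
    (hONe : ∀ i j, dotc (e i) (e j) = if i = j then 1 else 0)
    (hlam : ∀ i, 0 ≤ lam i)
    (hdecρ : ρ = ∑ i, (lam i : ℂ) •
      Matrix.vecMulVec (e i) (fun k => (starRingEnd ℂ) (e i k)))
    (kap : Fin m → ℝ) (f : Fin m → Fin m → ℂ)
    (hONf : ∀ i j, dotc (f i) (f j) = if i = j then 1 else 0)
    (hkap : ∀ i, 0 ≤ kap i)
    (hdecσ : σ = ∑ i, (kap i : ℂ) •
      Matrix.vecMulVec (f i) (fun k => (starRingEnd ℂ) (f i k)))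
    (Lam : Fin n × Fin m → ℝ) (E : Fin n × Fin m → Fin n × Fin m → ℂ)
    (hONE : ∀ a b, dotc (E a) (E b) = if a = b then 1 else 0)
    (hLam : ∀ a, 0 ≤ Lam a)
    (hdecBig : ρ ⊗ₖ σ = ∑ a, (Lam a : ℂ) •
      Matrix.vecMulVec (E a) (fun k => (starRingEnd ℂ) (E a k))) :
    qfi Lam E ((s : ℂ) • (A ⊗ₖ (1 : Matrix (Fin m) (Fin m) ℂ)) +
        (t : ℂ) • ((1 : Matrix (Fin n) (Fin n) ℂ) ⊗ₖ B))
      = s ^ 2 * qfi lam e A + t ^ 2 * qfi kap f B := by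
  have hsl : ∑ i, lam i = 1 := sum_eig_one lam e hONe ρ hdecρ htrρ
  have hsk : ∑ j, kap j = 1 := sum_eig_one kap f hONf σ hdecσ htrσ
  have hONg : ∀ p q : Fin n × Fin m,
      dotc (fun r : Fin n × Fin m => e p.1 r.1 * f p.2 r.2)
        (fun r : Fin n × Fin m => e q.1 r.1 * f q.2 r.2) = if p = q then 1 else 0 := by
    intro p q
    rw [dotc_prod, hONe, hONf]
    by_cases h1 : p.1 = q.1 <;> by_cases h2 : p.2 = q.2 <;>
      simp [h1, h2, Prod.ext_iff]
  have hMM : (∑ p : Fin n × Fin m, ((lam p.1 * kap p.2 : ℝ) : ℂ) •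
        Matrix.vecMulVec (fun q : Fin n × Fin m => e p.1 q.1 * f p.2 q.2)
          (fun q => (starRingEnd ℂ) (e p.1 q.1 * f p.2 q.2)))
      = ∑ a, (Lam a : ℂ) • Matrix.vecMulVec (E a) (fun k => (starRingEnd ℂ) (E a k)) := by
    rw [← kron_dec lam kap e f ρ σ hdecρ hdecσ]
    exact hdecBig
  set O : Matrix (Fin n × Fin m) (Fin n × Fin m) ℂ :=
    (s : ℂ) • (A ⊗ₖ (1 : Matrix (Fin m) (Fin m) ℂ)) +
      (t : ℂ) • ((1 : Matrix (Fin n) (Fin n) ℂ) ⊗ₖ B) with hO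
  have hinv := qfi_invariant (fun p : Fin n × Fin m => lam p.1 * kap p.2) Lam
    (fun p q => e p.1 q.1 * f p.2 q.2) E O hONg hONE hMM
  have melem : ∀ p q : Fin n × Fin m,
      dotc (fun r : Fin n × Fin m => e p.1 r.1 * f p.2 r.2)
        (O.mulVec (fun r : Fin n × Fin m => e q.1 r.1 * f q.2 r.2))
      = (s : ℂ) * ((if p.2 = q.2 then (1 : ℂ) else 0) * dotc (e p.1) (A.mulVec (e q.1)))
        + (t : ℂ) * ((if p.1 = q.1 then (1 : ℂ) else 0) * dotc (f p.2) (B.mulVec (f q.2))) := by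
    intro p q
    rw [hO, Matrix.add_mulVec, Matrix.smul_mulVec, Matrix.smul_mulVec]
    rw [dotc_add_right, dotc_smul_right', dotc_smul_right']
    rw [kron_mulVec_prod A 1 (e q.1) (f q.2), kron_mulVec_prod 1 B (e q.1) (f q.2)]
    rw [Matrix.one_mulVec, Matrix.one_mulVec]
    rw [dotc_prod, dotc_prod, hONf, hONe]
    ring
  have hps := qfi_prod_sum lam kap
    (fun i k => dotc (e i) (A.mulVec (e k))) (fun j l => dotc (f j) (B.mulVec (f l))) s t
    hsl hsk
    (fun p q => dotc (fun r : Fin n × Fin m => e p.1 r.1 * f p.2 r.2)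
      (O.mulVec (fun r : Fin n × Fin m => e q.1 r.1 * f q.2 r.2))) melem
  rw [qfi_eq, hinv, hps, qfi_eq lam e A, qfi_eq kap f B]
  ring
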